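/- With notation as in the context, taking M = T (as a module over itself): the congruence module C_0^λ(T) = eT/(eT ∩ T) is isomorphic as an 𝒪-module to 𝒪/λ(T[ker λ]) = 𝒪/λ(Ann_T(ker λ)), and consequently η_λ(T) = η_λ, i.e. Fitt_𝒪(eT/(eT ∩ T)) = λ(Ann_T(ker λ)). -/

import Mathlib

/-!
As `T_E` is reduced, an element vanishes as soon as it lies in every prime. So `e` kills
`t - λ(t)` for `t ∈ T`, whence `e t = λ(t) e`, `eT = 𝒪 e` and `C₀^λ(T) ≅ 𝒪/{r | r e ∈ T}`.
If `s ∈ Ann_T(ker λ)` then `s` lies in every prime of `T_E` other than `ker λ_E` (which is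
maximal and generated by `ker λ`), so `e s = s` and `λ(s) e = s ∈ T`; conversely `r e = s ∈ T`
forces `s · ker λ = e r · ker λ = 0` and `λ(s) = r`. Thus `{r | r e ∈ T} = λ(Ann_T(ker λ))`,
and over the principal ideal ring `𝒪` the Fitting ideal of `𝒪/J` is `J`.
-/

/-- The 0-th Fitting ideal of a module `N` over a commutative ring `R`: the ideal generated
by the determinants of `n × n` matrices all of whose columns are relations for some
`n`-element generating family of `N`. -/
def fittingIdeal (R : Type*) [CommRing R] (N : Type*) [AddCommGroup N] [Module R N] :
    Ideal R :=
  Ideal.span { r : R | ∃ (n : ℕ) (π : (Fin n → R) →ₗ[R] N) (_ : Function.Surjective π)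
    (A : Matrix (Fin n) (Fin n) R), (∀ j, π (fun i => A i j) = 0) ∧ r = A.det }

/-- The `𝒪`-submodule `e·T` of `T_E`. -/
noncomputable def eTsub (O T TE : Type*) [CommRing O] [CommRing T] [CommRing TE]
    [Algebra O T] [Algebra O TE] [Algebra T TE] [IsScalarTower O T TE] (e : TE) :
    Submodule O TE :=
  Submodule.span O {x : TE | ∃ t : T, x = e * algebraMap T TE t}

/-- The `𝒪`-submodule `T ⊆ T_E` (image of `T`). -/
noncomputable def Tsub (O T TE : Type*) [CommRing O] [CommRing T] [CommRing TE]
    [Algebra O T] [Algebra O TE] [Algebra T TE] [IsScalarTower O T TE] :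
    Submodule O TE :=
  LinearMap.range ((IsScalarTower.toAlgHom O T TE).toLinearMap)

/-- The congruence module `C₀^λ(T) = e·T/(e·T ∩ T)`, formed inside `T_E`. -/
noncomputable abbrev C0T (O T TE : Type*) [CommRing O] [CommRing T] [CommRing TE]
    [Algebra O T] [Algebra O TE] [Algebra T TE] [IsScalarTower O T TE] (e : TE) :=
  ↥(eTsub O T TE e) ⧸
    (Submodule.comap (eTsub O T TE e).subtype (eTsub O T TE e ⊓ Tsub O T TE))

section FittingIdeal

variable {R : Type*} [CommRing R]

theorem fittingIdeal_le_annihilator (N : Type*) [AddCommGroup N] [Module R N] :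
    fittingIdeal R N ≤ Module.annihilator R N := by
  rw [fittingIdeal, Ideal.span_le]
  rintro _ ⟨n, π, hπ, A, hA, rfl⟩
  refine Module.mem_annihilator.mpr fun x => ?_
  obtain ⟨f, rfl⟩ := hπ x
  -- `det A • f = A (adj A f)` is a combination of the columns of `A`, all of which `π` kills.
  have hcols : A.det • f = ∑ j, (A.adjugate.mulVec f) j • fun i => A i j := calc
    A.det • f = A.mulVec (A.adjugate.mulVec f) := by
      rw [Matrix.mulVec_mulVec, Matrix.mul_adjugate, Matrix.smul_mulVec, Matrix.one_mulVec]
    _ = _ := by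
      funext i
      simp [Matrix.mulVec, dotProduct, mul_comm]
  rw [← π.map_smul, hcols, map_sum]
  simp [hA]

theorem fittingIdeal_le_of_linearEquiv {N N' : Type*} [AddCommGroup N] [Module R N]
    [AddCommGroup N'] [Module R N'] (g : N ≃ₗ[R] N') :
    fittingIdeal R N ≤ fittingIdeal R N' := by
  rw [fittingIdeal, Ideal.span_le]
  rintro _ ⟨n, π, hπ, A, hA, rfl⟩
  exact Ideal.subset_span
    ⟨n, g.toLinearMap ∘ₗ π, g.surjective.comp hπ, A, fun j => by simp [hA j], rfl⟩

theorem fittingIdeal_congr {N N' : Type*} [AddCommGroup N] [Module R N]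
    [AddCommGroup N'] [Module R N'] (g : N ≃ₗ[R] N') :
    fittingIdeal R N = fittingIdeal R N' :=
  (fittingIdeal_le_of_linearEquiv g).antisymm (fittingIdeal_le_of_linearEquiv g.symm)

theorem fittingIdeal_quotient [IsPrincipalIdealRing R] (J : Ideal R) :
    fittingIdeal R (R ⧸ J) = J := by
  refine le_antisymm (fun r hr => ?_) fun b hb => ?_
  · have := Module.mem_annihilator.mp (fittingIdeal_le_annihilator (R ⧸ J) hr)
      (Submodule.Quotient.mk 1)
    rwa [← Submodule.Quotient.mk_smul, smul_eq_mul, mul_one,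
      Submodule.Quotient.mk_eq_zero] at this
  obtain ⟨a, rfl⟩ := (IsPrincipalIdealRing.principal J).principal
  obtain ⟨c, rfl⟩ := Ideal.mem_span_singleton'.mp hb
  refine Ideal.mul_mem_left _ c (Ideal.subset_span ?_)
  -- the `1 × 1` relation matrix `(a)` for the generator `1` of `R ⧸ (a)`
  refine ⟨1, (Submodule.mkQ _) ∘ₗ LinearMap.proj 0, fun x => ?_, fun _ _ => a, fun _ => ?_,
    (Matrix.det_fin_one (fun _ _ => a)).symm⟩
  · obtain ⟨y, rfl⟩ := Submodule.mkQ_surjective _ x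
    exact ⟨fun _ => y, rfl⟩
  · simp

end FittingIdeal

section Idempotent

variable {A K : Type*} [CommRing A] [IsReduced A] {e : A}

theorem eq_zero_of_mem_of_forall_isPrime_ne {Q : Ideal A} {z : A} (hzQ : z ∈ Q)
    (hz : ∀ P : Ideal A, P.IsPrime → P ≠ Q → z ∈ P) : z = 0 :=
  (nilpotent_iff_mem_prime.mpr fun P hP =>
    if hPQ : P = Q then hPQ ▸ hzQ else hz P hP hPQ).eq_zero

theorem mul_eq_zero_of_mem_primes_ne_ker [CommRing K] {φ : A →+* K}
    (he : ∀ P : Ideal A, P.IsPrime → P ≠ RingHom.ker φ → e ∈ P) {a : A} (ha : φ a = 0) :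
    e * a = 0 :=
  eq_zero_of_mem_of_forall_isPrime_ne (by simp [ha]) fun P _ hP => P.mul_mem_right a (he P ‹_› hP)

theorem mul_eq_self_of_mem_primes_ne_ker [Field K] {φ : A →+* K} (hφ : Function.Surjective φ)
    (he1 : φ e = 1) {s : A} (hs : ∀ x ∈ RingHom.ker φ, s * x = 0) : e * s = s := by
  suffices (1 - e) * s = 0 by rwa [sub_mul, one_mul, sub_eq_zero, eq_comm] at this
  refine eq_zero_of_mem_of_forall_isPrime_ne (Q := RingHom.ker φ) (by simp [he1])
    fun P hP hPker => P.mul_mem_left _ ?_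
  -- `ker φ` is maximal, so it is not contained in the prime `P ≠ ker φ`.
  obtain ⟨x, hx, hxP⟩ : ∃ x ∈ RingHom.ker φ, x ∉ P := SetLike.not_le_iff_exists.mp
    fun hle => hPker ((RingHom.ker_isMaximal_of_surjective φ hφ).eq_of_le hP.ne_top hle).symm
  exact (hP.mem_or_mem (hs x hx ▸ P.zero_mem)).resolve_right hxP

end Idempotent

theorem Submodule.ker_mkQ_comp_codRestrict_toSpanSingleton {R M : Type*} [CommRing R]
    [AddCommGroup M] [Module R M] {P : Submodule R M} {x : M} (hx : ∀ r : R, r • x ∈ P)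
    (N : Submodule R M) :
    LinearMap.ker ((comap P.subtype (P ⊓ N)).mkQ ∘ₗ
      (LinearMap.toSpanSingleton R M x).codRestrict P hx) =
      N.comap (LinearMap.toSpanSingleton R M x) := by
  ext r
  rw [LinearMap.mem_ker, LinearMap.comp_apply, mkQ_apply, Quotient.mk_eq_zero, mem_comap,
    subtype_apply, mem_inf]
  exact and_iff_right (hx r)

noncomputable def Submodule.quotientInfEquivOfEqSpanSingleton {R M : Type*} [CommRing R]
    [AddCommGroup M] [Module R M] {P : Submodule R M} {x : M} (hP : P = R ∙ x)
    (N : Submodule R M) :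
    (P ⧸ comap P.subtype (P ⊓ N)) ≃ₗ[R] R ⧸ N.comap (LinearMap.toSpanSingleton R M x) :=
  have hx : ∀ r : R, r • x ∈ P := fun r => hP ▸ smul_mem _ r (mem_span_singleton_self x)
  have hsurj : Function.Surjective ((LinearMap.toSpanSingleton R M x).codRestrict P hx) :=
    fun y => by
      obtain ⟨r, hr⟩ := mem_span_singleton.mp (by rw [← hP]; exact y.2)
      exact ⟨r, Subtype.ext hr⟩
  ((quotEquivOfEq _ _ (ker_mkQ_comp_codRestrict_toSpanSingleton hx N).symm).trans
    (LinearMap.quotKerEquivOfSurjective _ ((mkQ_surjective _).comp hsurj))).symm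

open scoped nonZeroDivisors in
theorem Module.Flat.algebraMapSubmonoid_le_nonZeroDivisors {R S : Type*} [CommRing R]
    [CommRing S] [Algebra R S] [Module.Flat R S] :
    Algebra.algebraMapSubmonoid S R⁰ ≤ S⁰ := by
  rintro _ ⟨c, hc, rfl⟩
  refine mem_nonZeroDivisors_iff_right.mpr fun x hx => ?_
  refine Module.Flat.isSMulRegular_of_nonZeroDivisors (M := S) hc (?_ : c • x = c • 0)
  rw [smul_zero, Algebra.smul_def, mul_comm, hx]

theorem IsLocalization.isReduced {R S : Type*} [CommRing R] [IsReduced R] (M : Submonoid R)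
    [CommRing S] [Algebra R S] [IsLocalization M S] : IsReduced S :=
  isReduced_of_injective (IsLocalization.algEquiv M S (Localization M))
    (IsLocalization.algEquiv M S (Localization M)).injective

section CongruenceModule

variable {O E T TE : Type*} [CommRing O] [Field E] [Algebra O E] [CommRing T] [Algebra O T]
  [CommRing TE] [Algebra T TE] [Algebra E TE] {lam : T →ₐ[O] O} {lamE : TE →ₐ[E] E} {e : TE}

theorem algebraMap_mul_eq_zero_of_mem_annihilator (M : Submonoid T) [IsLocalization M TE]
    (hO : Function.Injective (algebraMap O E))
    (hlamE : ∀ t : T, lamE (algebraMap T TE t) = algebraMap O E (lam t))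
    {s : T} (hs : s ∈ (RingHom.ker lam).annihilator) {x : TE} (hx : x ∈ RingHom.ker lamE) :
    algebraMap T TE s * x = 0 := by
  obtain ⟨⟨y, m⟩, hxy⟩ := IsLocalization.surj M x
  have hy : lam y = 0 := hO <| by
    rw [map_zero, ← hlamE, ← hxy, map_mul, RingHom.mem_ker.mp hx, zero_mul]
  have hsy : s * y = 0 := Submodule.mem_annihilator.mp hs y hy
  rw [← (IsLocalization.map_units TE m).mul_left_eq_zero, mul_assoc, hxy, ← map_mul, hsy,
    map_zero]

variable [Algebra O TE] [IsScalarTower O T TE]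

theorem lamE_algebraMap (hlamE : ∀ t : T, lamE (algebraMap T TE t) = algebraMap O E (lam t))
    (r : O) : lamE (algebraMap O TE r) = algebraMap O E r := by
  rw [IsScalarTower.algebraMap_apply O T TE, hlamE, AlgHom.commutes, Algebra.algebraMap_self,
    RingHom.id_apply]

theorem mul_algebraMap_eq_smul [IsReduced TE]
    (hlamE : ∀ t : T, lamE (algebraMap T TE t) = algebraMap O E (lam t))
    (he : ∀ P : Ideal TE, P.IsPrime → P ≠ RingHom.ker lamE → e ∈ P) (t : T) :
    e * algebraMap T TE t = lam t • e := by
  rw [Algebra.smul_def, mul_comm _ e, ← sub_eq_zero, ← mul_sub,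
    IsScalarTower.algebraMap_apply O T TE, ← map_sub]
  refine mul_eq_zero_of_mem_primes_ne_ker (φ := (lamE : TE →+* E)) he ?_
  simp [hlamE]

theorem eTsub_eq_span_singleton [IsReduced TE]
    (hlamE : ∀ t : T, lamE (algebraMap T TE t) = algebraMap O E (lam t))
    (he : ∀ P : Ideal TE, P.IsPrime → P ≠ RingHom.ker lamE → e ∈ P) :
    eTsub O T TE e = O ∙ e := by
  refine le_antisymm (Submodule.span_le.mpr ?_) (Submodule.span_singleton_le_iff_mem _ _ |>.mpr ?_)
  · rintro _ ⟨t, rfl⟩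
    rw [mul_algebraMap_eq_smul hlamE he]
    exact Submodule.smul_mem _ _ (Submodule.mem_span_singleton_self e)
  · exact Submodule.subset_span ⟨1, by rw [map_one, mul_one]⟩

theorem smul_mem_Tsub_iff [IsReduced TE] (M : Submonoid T) [IsLocalization M TE]
    (hO : Function.Injective (algebraMap O E)) (hT : Function.Injective (algebraMap T TE))
    (hlamE : ∀ t : T, lamE (algebraMap T TE t) = algebraMap O E (lam t)) (he1 : lamE e = 1)
    (he : ∀ P : Ideal TE, P.IsPrime → P ≠ RingHom.ker lamE → e ∈ P) (r : O) :
    r • e ∈ Tsub O T TE ↔ r ∈ Ideal.map lam (RingHom.ker lam).annihilator := by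
  have hsurj : Function.Surjective lam := fun r => ⟨algebraMap O T r, lam.commutes r⟩
  rw [Ideal.mem_map_iff_of_surjective _ hsurj]
  constructor
  · rintro ⟨s, hs⟩
    replace hs : algebraMap T TE s = r • e := hs
    refine ⟨s, Submodule.mem_annihilator.mpr fun y hy => hT ?_, hO ?_⟩
    · rw [smul_eq_mul, map_mul, hs, smul_mul_assoc, mul_algebraMap_eq_smul hlamE he,
        RingHom.mem_ker.mp hy, zero_smul, smul_zero, map_zero]
    · rw [← hlamE, hs, Algebra.smul_def, map_mul, he1, mul_one, lamE_algebraMap hlamE]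
  · rintro ⟨s, hs, rfl⟩
    refine ⟨s, ?_⟩
    change algebraMap T TE s = lam s • e
    rw [← mul_algebraMap_eq_smul hlamE he, eq_comm]
    exact mul_eq_self_of_mem_primes_ne_ker (φ := (lamE : TE →+* E))
      (fun x => ⟨algebraMap E TE x, lamE.commutes x⟩) he1
      fun x hx => algebraMap_mul_eq_zero_of_mem_annihilator M hO hlamE hs hx

end CongruenceModule

theorem statement3_general
    {O : Type*} [CommRing O] [IsDomain O] [IsDiscreteValuationRing O]
    {E : Type*} [Field E] [Algebra O E] [IsFractionRing O E]
    {T : Type*} [CommRing T] [IsReduced T]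
    [Algebra O T] [Module.Flat O T]
    {TE : Type*} [CommRing TE] [Algebra T TE] [Algebra O TE] [Algebra E TE]
    [IsScalarTower O T TE]
    [IsLocalization (Algebra.algebraMapSubmonoid T (nonZeroDivisors O)) TE]
    (lam : T →ₐ[O] O)
    (lamE : TE →ₐ[E] E) (e : TE)
    (hlamE : ∀ t : T, lamE (algebraMap T TE t) = algebraMap O E (lam t))
    (he1 : lamE e = 1)
    (he2 : ∀ P : Ideal TE, P.IsPrime → P ≠ RingHom.ker lamE → e ∈ P) :
    Nonempty ((C0T O T TE e) ≃ₗ[O]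
        (O ⧸ Ideal.map lam (Submodule.annihilator (RingHom.ker lam)))) ∧
    fittingIdeal O (C0T O T TE e) = Ideal.map lam (Submodule.annihilator (RingHom.ker lam)) := by
  set J := Ideal.map lam (Submodule.annihilator (RingHom.ker lam))
  let M := Algebra.algebraMapSubmonoid T (nonZeroDivisors O)
  have : IsReduced TE := IsLocalization.isReduced M
  have hT : Function.Injective (algebraMap T TE) :=
    IsLocalization.injective TE (Module.Flat.algebraMapSubmonoid_le_nonZeroDivisors (R := O))
  have hJ : (Tsub O T TE).comap (LinearMap.toSpanSingleton O TE e) = J :=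
    Submodule.ext (smul_mem_Tsub_iff M (IsFractionRing.injective O E) hT hlamE he1 he2)
  let eqv : C0T O T TE e ≃ₗ[O] O ⧸ J :=
    (Submodule.quotientInfEquivOfEqSpanSingleton (eTsub_eq_span_singleton hlamE he2) _).trans
      (Submodule.quotEquivOfEq _ _ hJ)
  exact ⟨⟨eqv⟩, by rw [fittingIdeal_congr eqv, fittingIdeal_quotient]⟩

/-- With `𝒪` a complete DVR with fraction field `E`, `T` a commutative
reduced finite flat local `𝒪`-algebra, `λ : T → 𝒪` an `𝒪`-algebra homomorphism, and `e`
the idempotent of `T_E = T ⊗_𝒪 E` attached to `λ`: the congruence module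
`C₀^λ(T) = eT/(eT ∩ T)` is isomorphic as an `𝒪`-module to `𝒪/λ(Ann_T(ker λ))`, and its
Fitting ideal `η_λ(T)` equals `η_λ = λ(Ann_T(ker λ))`. -/
theorem statement3
    {O : Type*} [CommRing O] [IsDomain O] [IsDiscreteValuationRing O]
    [IsAdicComplete (IsLocalRing.maximalIdeal O) O]
    {E : Type*} [Field E] [Algebra O E] [IsFractionRing O E]
    {T : Type*} [CommRing T] [IsReduced T] [IsLocalRing T]
    [Algebra O T] [Module.Finite O T] [Module.Flat O T]
    {TE : Type*} [CommRing TE] [Algebra T TE] [Algebra O TE] [Algebra E TE]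
    [IsScalarTower O T TE] [IsScalarTower O E TE]
    [IsLocalization (Algebra.algebraMapSubmonoid T (nonZeroDivisors O)) TE]
    (lam : T →ₐ[O] O)
    (lamE : TE →ₐ[E] E) (e : TE)
    (hlamE : ∀ t : T, lamE (algebraMap T TE t) = algebraMap O E (lam t))
    (he1 : lamE e = 1)
    (he2 : ∀ P : Ideal TE, P.IsPrime → P ≠ RingHom.ker lamE → e ∈ P) :
    Nonempty ((C0T O T TE e) ≃ₗ[O]
        (O ⧸ Ideal.map lam (Submodule.annihilator (RingHom.ker lam)))) ∧
    fittingIdeal O (C0T O T TE e) = Ideal.map lam (Submodule.annihilator (RingHom.ker lam)) :=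
  statement3_general lam lamE e hlamE he1 he2
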